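/- arXiv:2009.12295 — 5 statements merged into one kernel-verified Lean document; each statement's English description precedes it below -/
import Mathlib

section
/- For 1/2 < α < 1 and any positive integer n, (n+1) · Σ_{k=1}^{n} ((1 − k/(n+1))^α − (1 − (k+1)/(n+1))^α)² ≤ α²/(2α−1). -/
/-!
Each summand has the form `(b ^ α - a ^ α) ^ 2` with `0 ≤ a` and `b - a = 1 / (n + 1)`.
Writing `b ^ α - a ^ α = ∫ t in a..b, α * t ^ (α - 1)`, Cauchy–Schwarz bounds it by
`(b - a) * ∫ t in a..b, α ^ 2 * t ^ (2 * α - 2)`, that is, by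
`α ^ 2 / (2 * α - 1) * (b - a) * (b ^ (2 * α - 1) - a ^ (2 * α - 1))`; the integrand is
integrable at `0` because `α > 1 / 2`. Summed over `k`, these bounds telescope to at most
`α ^ 2 / (2 * α - 1) / (n + 1)`.
-/

open MeasureTheory Set

theorem sq_intervalIntegral_le_mul_intervalIntegral_sq {f : ℝ → ℝ} {a b : ℝ} (hab : a ≤ b)
    (hf : IntervalIntegrable f volume a b)
    (hf2 : IntervalIntegrable (fun t => f t ^ 2) volume a b) :
    (∫ t in a..b, f t) ^ 2 ≤ (b - a) * ∫ t in a..b, f t ^ 2 := by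
  rcases hab.eq_or_lt with rfl | hlt
  · simp
  have hpos : 0 < b - a := sub_pos.2 hlt
  have hvol : volume.real (Ioc a b) = b - a := by
    rw [Real.volume_real_Ioc, max_eq_left hpos.le]
  have jensen := (even_two.convexOn_pow (𝕜 := ℝ)).map_set_average_le (μ := volume)
    (t := Ioc a b) (continuous_pow 2).continuousOn isClosed_univ (by simp [hlt]) (by simp)
    (by simp) ((intervalIntegrable_iff_integrableOn_Ioc_of_le hab).1 hf)
    ((intervalIntegrable_iff_integrableOn_Ioc_of_le hab).1 hf2)
  simp only [setAverage_eq, hvol, smul_eq_mul] at jensen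
  rw [mul_pow, inv_pow, inv_mul_le_iff₀ (by positivity)] at jensen
  rw [intervalIntegral.integral_of_le hab, intervalIntegral.integral_of_le hab]
  calc _ ≤ (b - a) ^ 2 * ((b - a)⁻¹ * ∫ t in Ioc a b, f t ^ 2) := jensen
    _ = _ := by field_simp

theorem rpow_sub_rpow_sq_le {α a b : ℝ} (hα : 1 / 2 < α) (ha : 0 ≤ a) (hab : a ≤ b) :
    (b ^ α - a ^ α) ^ 2 ≤
      α ^ 2 / (2 * α - 1) * (b - a) * (b ^ (2 * α - 1) - a ^ (2 * α - 1)) := by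
  have hsq : EqOn (fun t => (α * t ^ (α - 1)) ^ 2) (fun t => α ^ 2 * t ^ (2 * α - 2))
      (uIcc a b) := by
    intro t ht
    have ht0 : 0 ≤ t := ha.trans (by simpa [hab] using ht.1)
    dsimp only
    rw [mul_pow, ← Real.rpow_mul_natCast ht0]
    ring_nf
  have hf : IntervalIntegrable (fun t => α * t ^ (α - 1)) volume a b :=
    (intervalIntegral.intervalIntegrable_rpow' (by linarith)).const_mul α
  have hf2 : IntervalIntegrable (fun t => (α * t ^ (α - 1)) ^ 2) volume a b :=
    ((intervalIntegral.intervalIntegrable_rpow' (by linarith)).const_mul (α ^ 2)).congr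
      (hsq.symm.mono uIoc_subset_uIcc)
  have hI : ∫ t in a..b, α * t ^ (α - 1) = b ^ α - a ^ α := by
    rw [intervalIntegral.integral_const_mul, integral_rpow (Or.inl (by linarith)),
      sub_add_cancel]
    field_simp
  have hJ : ∫ t in a..b, (α * t ^ (α - 1)) ^ 2 =
      α ^ 2 / (2 * α - 1) * (b ^ (2 * α - 1) - a ^ (2 * α - 1)) := by
    rw [intervalIntegral.integral_congr hsq, intervalIntegral.integral_const_mul,
      integral_rpow (Or.inl (by linarith))]
    ring_nf
  have := sq_intervalIntegral_le_mul_intervalIntegral_sq hab hf hf2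
  rw [hI, hJ] at this
  linarith

theorem sq_rpow_one_sub_div_sub_le {α N x : ℝ} (hα : 1 / 2 < α) (hN : 0 < N)
    (hx : x + 1 ≤ N) :
    ((1 - x / N) ^ α - (1 - (x + 1) / N) ^ α) ^ 2 ≤
      α ^ 2 / (2 * α - 1) / N *
        ((1 - x / N) ^ (2 * α - 1) - (1 - (x + 1) / N) ^ (2 * α - 1)) := by
  have h := rpow_sub_rpow_sq_le (a := 1 - (x + 1) / N) (b := 1 - x / N) hα
    (by rw [sub_nonneg, div_le_one hN]; exact hx) (by gcongr; linarith)
  convert h using 1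
  field_simp
  ring

theorem stmt1_general (α : ℝ) (hα1 : 1 / 2 < α) (n : ℕ) (hn : 1 ≤ n) :
    ((n : ℝ) + 1) * ∑ k ∈ Finset.Icc 1 n,
        ((1 - (k : ℝ) / ((n : ℝ) + 1)) ^ α - (1 - ((k : ℝ) + 1) / ((n : ℝ) + 1)) ^ α) ^ 2
      ≤ α ^ 2 / (2 * α - 1) := by
  set C := α ^ 2 / (2 * α - 1)
  set N : ℝ := (n : ℝ) + 1
  set u : ℕ → ℝ := fun k => (1 - (k : ℝ) / N) ^ (2 * α - 1)
  have hN : 0 < N := by positivity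
  have h2α : 0 < 2 * α - 1 := by linarith
  have hterm : ∀ k ∈ Finset.Icc 1 n,
      ((1 - (k : ℝ) / N) ^ α - (1 - ((k : ℝ) + 1) / N) ^ α) ^ 2 ≤
        C / N * (u k - u (k + 1)) := by
    intro k hk
    have hkN : (k : ℝ) + 1 ≤ N := by simpa [N] using (Finset.mem_Icc.1 hk).2
    simpa [u] using sq_rpow_one_sub_div_sub_le hα1 hN hkN
  have htelescope : ∑ k ∈ Finset.Icc 1 n, (u k - u (k + 1)) = u 1 - u (n + 1) := by
    rw [← neg_sub, ← Finset.sum_Icc_sub hn u]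
    simp
  have hu_last : u (n + 1) = 0 := by
    simp only [u, Nat.cast_succ]
    rw [show (n : ℝ) + 1 = N from rfl, div_self hN.ne', sub_self, Real.zero_rpow h2α.ne']
  have hu_first : u 1 ≤ 1 := by
    refine Real.rpow_le_one ?_ ?_ h2α.le
    · rw [Nat.cast_one, sub_nonneg, div_le_one hN]
      simp [N]
    · simp only [Nat.cast_one, sub_le_self_iff]
      positivity
  calc N * ∑ k ∈ Finset.Icc 1 n, ((1 - (k : ℝ) / N) ^ α - (1 - ((k : ℝ) + 1) / N) ^ α) ^ 2
      ≤ N * ∑ k ∈ Finset.Icc 1 n, C / N * (u k - u (k + 1)) := by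
        gcongr with k hk
        exact hterm k hk
    _ = C * u 1 := by rw [← Finset.mul_sum, htelescope, hu_last, sub_zero]; field_simp
    _ ≤ C := mul_le_of_le_one_right (div_nonneg (sq_nonneg α) h2α.le) hu_first

theorem stmt1 (α : ℝ) (hα1 : 1 / 2 < α) (hα2 : α < 1) (n : ℕ) (hn : 1 ≤ n) :
    ((n : ℝ) + 1) * ∑ k ∈ Finset.Icc 1 n,
        ((1 - (k : ℝ) / ((n : ℝ) + 1)) ^ α - (1 - ((k : ℝ) + 1) / ((n : ℝ) + 1)) ^ α) ^ 2
      ≤ α ^ 2 / (2 * α - 1) :=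
  stmt1_general α hα1 n hn
end

section
/- For α = 1/2, the quantity (n+1)^0 · (m/(n+1)) Σ_{k=m}^{n} (√(n+1−k) − √(n−k))² /(n+1) with m = ⌈(n+1)/2⌉ is unbounded in n; i.e., sup_n m/(n+1) · Σ_{k=m}^n ((1−k/(n+1))^{1/2} − (1−(k+1)/(n+1))^{1/2})² = ∞. -/
/-!
Write `A = n + 1`. Since `√a - √b = (a - b) / (√a + √b) ≥ (a - b) / (2√a)`, the `k`-th term is at
least `1 / (4A(A - k))`, so the sum over `m ≤ k ≤ n` dominates `H_{n+1-m} / (4A)` after reflecting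
`k ↦ n - k`. For `n = 2N + 1` we have `m = N + 1`, and the quantity is at least `H_{N+1} / 8`, which
is unbounded.
-/

open Finset Real

lemma sq_div_four_mul_le_sq_sqrt_sub_sqrt {a b : ℝ} (hb : 0 ≤ b) (hba : b ≤ a) :
    (a - b) ^ 2 / (4 * a) ≤ (√a - √b) ^ 2 := by
  have hdiff : a - b = (√a - √b) * (√a + √b) := by
    linear_combination -sq_sqrt (hb.trans hba) + sq_sqrt hb
  have hsum : (√a + √b) ^ 2 ≤ 4 * a := by
    have := sqrt_le_sqrt hba
    nlinarith [sq_sqrt (hb.trans hba), sqrt_nonneg b]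
  refine div_le_of_le_mul₀ (by linarith) (sq_nonneg _) ?_
  calc (a - b) ^ 2 = (√a - √b) ^ 2 * (√a + √b) ^ 2 := by rw [hdiff]; ring
    _ ≤ (√a - √b) ^ 2 * (4 * a) := by gcongr

lemma inv_div_le_sq_rpow_sub_rpow {n k : ℕ} (hk : k ≤ n) :
    ((n : ℝ) + 1 - k)⁻¹ / (4 * ((n : ℝ) + 1)) ≤
      ((1 - (k : ℝ) / ((n : ℝ) + 1)) ^ ((1 : ℝ) / 2)
        - (1 - ((k : ℝ) + 1) / ((n : ℝ) + 1)) ^ ((1 : ℝ) / 2)) ^ 2 := by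
  have hkn : (k : ℝ) + 1 ≤ n + 1 := by exact_mod_cast Nat.succ_le_succ hk
  have hpos : (0 : ℝ) < n + 1 := by positivity
  rw [← sqrt_eq_rpow, ← sqrt_eq_rpow]
  convert sq_div_four_mul_le_sq_sqrt_sub_sqrt (a := 1 - (k : ℝ) / (n + 1))
    (b := 1 - ((k : ℝ) + 1) / (n + 1)) ?_ ?_ using 1
  · have : (n : ℝ) + 1 - k ≠ 0 := by linarith
    field_simp
    ring
  · rw [sub_nonneg, div_le_one hpos]
    exact hkn
  · gcongr
    linarith

lemma sum_Icc_inv_add_one_sub (m n : ℕ) :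
    ∑ k ∈ Icc m n, ((n : ℝ) + 1 - k)⁻¹ = ∑ j ∈ range (n + 1 - m), ((j : ℝ) + 1)⁻¹ := by
  have hreflect := sum_Ico_reflect (fun j : ℕ => ((j : ℝ) + 1)⁻¹) m (le_refl (n + 1))
  rw [Nat.sub_self, ← range_eq_Ico] at hreflect
  rw [← hreflect, ← Ico_add_one_right_eq_Icc]
  refine sum_congr rfl fun k hk => ?_
  rw [Nat.cast_sub (Nat.lt_succ_iff.mp (mem_Ico.mp hk).2)]
  ring_nf

lemma sum_range_inv_div_le_sum_sq_rpow_sub_rpow (m n : ℕ) :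
    (∑ j ∈ range (n + 1 - m), ((j : ℝ) + 1)⁻¹) / (4 * ((n : ℝ) + 1)) ≤
      ∑ k ∈ Icc m n, ((1 - (k : ℝ) / ((n : ℝ) + 1)) ^ ((1 : ℝ) / 2)
        - (1 - ((k : ℝ) + 1) / ((n : ℝ) + 1)) ^ ((1 : ℝ) / 2)) ^ 2 := by
  rw [← sum_Icc_inv_add_one_sub, sum_div]
  exact sum_le_sum fun k hk => inv_div_le_sq_rpow_sub_rpow (mem_Icc.mp hk).2

/-- The key divergence: with m = ⌈(n+1)/2⌉, the quantity
m · Σ_{k=m}^n ((1−k/(n+1))^{1/2} − (1−(k+1)/(n+1))^{1/2})²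
(= (m/(n+1)) · Σ_{k=m}^n (√(n+1−k) − √(n−k))²) is unbounded in n. -/
theorem stmt10 :
    ¬ BddAbove (Set.range fun n : ℕ =>
      (⌈((n : ℝ) + 1) / 2⌉₊ : ℝ) * ∑ k ∈ Finset.Icc ⌈((n : ℝ) + 1) / 2⌉₊ n,
        ((1 - (k : ℝ) / ((n : ℝ) + 1)) ^ ((1 : ℝ) / 2)
          - (1 - ((k : ℝ) + 1) / ((n : ℝ) + 1)) ^ ((1 : ℝ) / 2)) ^ 2) := by
  rintro ⟨M, hM⟩
  obtain ⟨N, hN⟩ := (tendsto_sum_range_one_div_nat_succ_atTop.eventually_gt_atTop (8 * M)).exists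
  simp only [one_div] at hN
  have hceil : ⌈(((2 * N + 1 : ℕ) : ℝ) + 1) / 2⌉₊ = N + 1 := by
    rw [show (((2 * N + 1 : ℕ) : ℝ) + 1) / 2 = ((N + 1 : ℕ) : ℝ) by push_cast; ring,
      Nat.ceil_natCast]
  have hbound := hM (Set.mem_range_self (2 * N + 1))
  rw [hceil] at hbound
  have hlower := sum_range_inv_div_le_sum_sq_rpow_sub_rpow (N + 1) (2 * N + 1)
  rw [show 2 * N + 1 + 1 - (N + 1) = N + 1 by omega] at hlower
  have hmono : ∑ j ∈ range N, ((j : ℝ) + 1)⁻¹ ≤ ∑ j ∈ range (N + 1), ((j : ℝ) + 1)⁻¹ :=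
    sum_le_sum_of_subset_of_nonneg (range_subset_range.mpr N.le_succ) fun _ _ _ => by positivity
  have : (∑ j ∈ range (N + 1), ((j : ℝ) + 1)⁻¹) / 8 ≤ M :=
    calc _ = ((N + 1 : ℕ) : ℝ) * ((∑ j ∈ range (N + 1), ((j : ℝ) + 1)⁻¹) /
            (4 * (((2 * N + 1 : ℕ) : ℝ) + 1))) := by
          push_cast
          field_simp
          ring
      _ ≤ _ := by gcongr
      _ ≤ M := hbound
  linarith
end

section
/- Let T_c be the upper-triangular infinite matrix with diagonal entries (T_c)_{kk} = c_k and entries (T_c)_{jk} = c_k − c_{k−1} for j < k (indices ≥ 1), where (c_k) is eventually zero with c_k = 0 for k > n. Then ‖T_c : ℓ² → ℓ²‖² ≤ (n+1) Σ_{k=1}^{n} |c_{k+1} − c_k|². -/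
/-!
Since `c (n + 1) = 0`, the diagonal entry `c (j + 1)` is minus the sum of the differences
`c (k + 1) - c k` to its right, so row `j` of `T_c f` equals
`∑_{j < k ≤ n} (c (k + 1) - c k) (f k - f j)`, and rows `j > n` vanish. Cauchy–Schwarz bounds
its square by `S ∑_{j < k ≤ n} ‖f k - f j‖²` with `S = ∑_{k=1}^n ‖c (k + 1) - c k‖²`, and summed
over `j` the pair sum is
`(n + 1) ∑_{k ≤ n} ‖f k‖² - ‖∑_{k ≤ n} f k‖² ≤ (n + 1) ‖f‖²`.
-/

open Finset

section DifferenceSums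

variable {E : Type*} [SeminormedAddCommGroup E] [InnerProductSpace ℝ E]

theorem sum_range_sum_range_norm_sub_sq (f : ℕ → E) (N : ℕ) :
    ∑ k ∈ range N, ∑ j ∈ range k, ‖f k - f j‖ ^ 2
      = N * ∑ k ∈ range N, ‖f k‖ ^ 2 - ‖∑ k ∈ range N, f k‖ ^ 2 := by
  induction N with
  | zero => simp
  | succ N ih =>
    have hnew : ∑ j ∈ range N, ‖f N - f j‖ ^ 2
        = N * ‖f N‖ ^ 2 - 2 * inner ℝ (f N) (∑ j ∈ range N, f j)
          + ∑ j ∈ range N, ‖f j‖ ^ 2 := by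
      simp only [norm_sub_sq_real, inner_sum, sum_add_distrib, sum_sub_distrib,
        ← mul_sum, sum_const, card_range, nsmul_eq_mul]
    rw [sum_range_succ, ih, hnew, sum_range_succ, sum_range_succ, add_comm _ (f N),
      norm_add_sq_real, real_inner_comm]
    push_cast
    ring

theorem sum_range_sum_range_norm_sub_sq_le (f : ℕ → E) (N : ℕ) :
    ∑ k ∈ range N, ∑ j ∈ range k, ‖f k - f j‖ ^ 2 ≤ N * ∑ k ∈ range N, ‖f k‖ ^ 2 := by
  rw [sum_range_sum_range_norm_sub_sq]
  exact sub_le_self _ (sq_nonneg _)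

end DifferenceSums

theorem norm_sum_mul_sq_le {ι R : Type*} [SeminormedRing R] (s : Finset ι) (d g : ι → R) :
    ‖∑ k ∈ s, d k * g k‖ ^ 2 ≤ (∑ k ∈ s, ‖d k‖ ^ 2) * ∑ k ∈ s, ‖g k‖ ^ 2 := by
  calc ‖∑ k ∈ s, d k * g k‖ ^ 2 ≤ (∑ k ∈ s, ‖d k‖ * ‖g k‖) ^ 2 := by
        gcongr
        exact (norm_sum_le _ _).trans (sum_le_sum fun k _ => norm_mul_le _ _)
    _ ≤ _ := sum_mul_sq_le_sq_mul_sq s _ _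

theorem lp.hasSum_norm_sq {ι : Type*} {E : ι → Type*} [∀ i, NormedAddCommGroup (E i)]
    (f : lp E 2) : HasSum (fun i => ‖f i‖ ^ 2) (‖f‖ ^ 2) := by
  simpa only [ENNReal.toReal_ofNat, Real.rpow_two] using lp.hasSum_norm (p := 2) (by norm_num) f

theorem ContinuousLinearMap.opNorm_sq_le_of_norm_sq_le {𝕜 E F : Type*}
    [NontriviallyNormedField 𝕜] [SeminormedAddCommGroup E] [SeminormedAddCommGroup F]
    [NormedSpace 𝕜 E] [NormedSpace 𝕜 F] (T : E →L[𝕜] F) {C : ℝ} (hC : 0 ≤ C)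
    (h : ∀ x, ‖T x‖ ^ 2 ≤ C * ‖x‖ ^ 2) : ‖T‖ ^ 2 ≤ C := by
  refine (Real.le_sqrt (norm_nonneg _) hC).mp (T.opNorm_le_bound (Real.sqrt_nonneg C) fun x => ?_)
  rw [← Real.sqrt_sq (norm_nonneg (T x)), ← Real.sqrt_sq (norm_nonneg x), ← Real.sqrt_mul hC]
  exact Real.sqrt_le_sqrt (h x)

/-- The entries of `T_c`, with 0-based indices. -/
def upperDiffMatrix {R : Type*} [Ring R] (c : ℕ → R) (j k : ℕ) : R :=
  if j = k then c (k + 1) else if j < k then c (k + 1) - c k else 0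

section UpperDiffMatrix

variable {R : Type*} {c : ℕ → R} {n : ℕ}

theorem upperDiffMatrix_eq_zero [Ring R] (hc : ∀ k, n < k → c k = 0) {j k : ℕ}
    (hk : k ∉ Ico j (n + 1)) : upperDiffMatrix c j k = 0 := by
  rw [mem_Ico, not_and_or, not_le, not_lt] at hk
  rcases hk with hkj | hnk
  · simp [upperDiffMatrix, hkj.ne', hkj.not_gt]
  · simp [upperDiffMatrix, hc k hnk, hc (k + 1) (by omega)]

theorem sum_upperDiffMatrix_mul [CommRing R] (hc : ∀ k, n < k → c k = 0) (f : ℕ → R) (j : ℕ) :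
    ∑ k ∈ Ico j (n + 1), upperDiffMatrix c j k * f k
      = ∑ k ∈ Ico (j + 1) (n + 1), (c (k + 1) - c k) * (f k - f j) := by
  rcases le_or_gt j n with hjn | hnj
  · have hdiag : c (j + 1) = -∑ k ∈ Ico (j + 1) (n + 1), (c (k + 1) - c k) := by
      rw [sum_Ico_sub c (by omega), hc (n + 1) (by omega)]
      ring
    have hoff : ∀ k ∈ Ico (j + 1) (n + 1), upperDiffMatrix c j k = c (k + 1) - c k := by
      intro k hk
      have hjk : j < k := by rw [mem_Ico] at hk; omega
      simp [upperDiffMatrix, hjk.ne, hjk]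
    rw [sum_eq_sum_Ico_succ_bot (by omega), sum_congr rfl fun k hk => by rw [hoff k hk],
      upperDiffMatrix, if_pos rfl, hdiag, neg_mul, sum_mul, neg_add_eq_sub, ← sum_sub_distrib]
    exact sum_congr rfl fun k _ => by ring
  · simp [Ico_eq_empty_of_le (show n + 1 ≤ j by omega),
      Ico_eq_empty_of_le (show n + 1 ≤ j + 1 by omega)]

theorem tsum_upperDiffMatrix_mul_eq_zero [Ring R] [TopologicalSpace R]
    (hc : ∀ k, n < k → c k = 0) (f : ℕ → R) {j : ℕ} (hj : n < j) :
    ∑' k, upperDiffMatrix c j k * f k = 0 := by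
  have hzero : ∀ k, upperDiffMatrix c j k = 0 := fun k =>
    upperDiffMatrix_eq_zero hc (by rw [mem_Ico]; omega)
  simp [hzero]

theorem norm_sq_tsum_upperDiffMatrix_mul_le [NormedCommRing R] (hc : ∀ k, n < k → c k = 0)
    (f : ℕ → R) (j : ℕ) :
    ‖∑' k, upperDiffMatrix c j k * f k‖ ^ 2
      ≤ (∑ k ∈ Icc 1 n, ‖c (k + 1) - c k‖ ^ 2) * ∑ k ∈ Ico (j + 1) (n + 1), ‖f k - f j‖ ^ 2 := by
  rw [tsum_eq_sum fun k hk => by rw [upperDiffMatrix_eq_zero hc hk, zero_mul],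
    sum_upperDiffMatrix_mul hc]
  refine (norm_sum_mul_sq_le _ _ _).trans ?_
  gcongr ?_ * _
  refine sum_le_sum_of_subset_of_nonneg (fun k hk => ?_) fun _ _ _ => sq_nonneg _
  rw [mem_Ico] at hk
  rw [mem_Icc]
  omega

end UpperDiffMatrix

theorem sum_range_norm_sq_tsum_upperDiffMatrix_mul_le {𝕜 : Type*} [RCLike 𝕜] {c : ℕ → 𝕜} {n : ℕ}
    (hc : ∀ k, n < k → c k = 0) (f : ℕ → 𝕜) :
    ∑ j ∈ range (n + 1), ‖∑' k, upperDiffMatrix c j k * f k‖ ^ 2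
      ≤ ((n + 1) * ∑ k ∈ Icc 1 n, ‖c (k + 1) - c k‖ ^ 2) * ∑ k ∈ range (n + 1), ‖f k‖ ^ 2 := by
  set S := ∑ k ∈ Icc 1 n, ‖c (k + 1) - c k‖ ^ 2
  calc ∑ j ∈ range (n + 1), ‖∑' k, upperDiffMatrix c j k * f k‖ ^ 2
      ≤ ∑ j ∈ range (n + 1), S * ∑ k ∈ Ico (j + 1) (n + 1), ‖f k - f j‖ ^ 2 :=
        sum_le_sum fun j _ => norm_sq_tsum_upperDiffMatrix_mul_le hc f j
    _ = S * ∑ k ∈ range (n + 1), ∑ j ∈ range k, ‖f k - f j‖ ^ 2 := by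
        rw [← mul_sum, range_eq_Ico, sum_Ico_Ico_comm' 0 (n + 1) fun j k => ‖f k - f j‖ ^ 2]
        simp only [← range_eq_Ico]
    _ ≤ S * ((n + 1 : ℕ) * ∑ k ∈ range (n + 1), ‖f k‖ ^ 2) := by
        gcongr
        exact sum_range_sum_range_norm_sub_sq_le f (n + 1)
    _ = (n + 1) * S * ∑ k ∈ range (n + 1), ‖f k‖ ^ 2 := by
        push_cast
        ring

theorem stmt17_general (c : ℕ → ℂ) (n : ℕ) (hc : ∀ k, n < k → c k = 0)
    (T : lp (fun _ : ℕ => ℂ) 2 →L[ℂ] lp (fun _ : ℕ => ℂ) 2)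
    (hT : ∀ (f : lp (fun _ : ℕ => ℂ) 2) (j : ℕ),
      (T f : ℕ → ℂ) j = ∑' k : ℕ,
        (if j = k then c (k + 1) else if j < k then c (k + 1) - c k else 0) * (f : ℕ → ℂ) k) :
    ‖T‖ ^ 2 ≤ ((n : ℝ) + 1) * ∑ k ∈ Finset.Icc 1 n, ‖c (k + 1) - c k‖ ^ 2 := by
  refine T.opNorm_sq_le_of_norm_sq_le (by positivity) fun f => ?_
  have hrow (j : ℕ) : (T f : ℕ → ℂ) j = ∑' k, upperDiffMatrix c j k * f k := hT f j
  have hTf : ‖T f‖ ^ 2 = ∑ j ∈ range (n + 1), ‖(T f : ℕ → ℂ) j‖ ^ 2 :=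
    (lp.hasSum_norm_sq (T f)).unique <| hasSum_sum_of_ne_finset_zero fun j hj => by
      rw [hrow, tsum_upperDiffMatrix_mul_eq_zero hc _ (by simpa using hj), norm_zero, sq, zero_mul]
  calc ‖T f‖ ^ 2
      ≤ ((n + 1) * ∑ k ∈ Icc 1 n, ‖c (k + 1) - c k‖ ^ 2) * ∑ k ∈ range (n + 1), ‖f k‖ ^ 2 := by
        simpa only [hTf, hrow] using sum_range_norm_sq_tsum_upperDiffMatrix_mul_le hc f
    _ ≤ _ := by
        gcongr
        exact sum_le_hasSum _ (fun _ _ => sq_nonneg _) (lp.hasSum_norm_sq f)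

/-- Upper bound for the norm of the upper-triangular matrix T_c on ℓ²
(indices shifted so that Lean index j corresponds to matrix index j+1 ≥ 1):
if c_k = 0 for k > n then ‖T_c‖² ≤ (n+1) Σ_{k=1}^n |c_{k+1} − c_k|². -/
theorem stmt17 (c : ℕ → ℂ) (n : ℕ) (hn : 1 ≤ n) (hc : ∀ k, n < k → c k = 0)
    (T : lp (fun _ : ℕ => ℂ) 2 →L[ℂ] lp (fun _ : ℕ => ℂ) 2)
    (hT : ∀ (f : lp (fun _ : ℕ => ℂ) 2) (j : ℕ),
      (T f : ℕ → ℂ) j = ∑' k : ℕ,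
        (if j = k then c (k + 1) else if j < k then c (k + 1) - c k else 0) * (f : ℕ → ℂ) k) :
    ‖T‖ ^ 2 ≤ ((n : ℝ) + 1) * ∑ k ∈ Finset.Icc 1 n, ‖c (k + 1) - c k‖ ^ 2 :=
  stmt17_general c n hc T hT
end

section
/- Let (c_k)_{k≥1} be eventually zero and T_c the upper-triangular matrix with (T_c)_{kk} = c_k and (T_c)_{jk} = c_k − c_{k−1} for j < k. Then for all integers 1 ≤ m ≤ n, ‖T_c : ℓ² → ℓ²‖² ≥ m · Σ_{k=m}^{n} |c_{k+1} − c_k|². -/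
/-!
Test `T_c` against `f = Σ_{k=m}^{n} conj(c_{k+1} - c_k) e_k`. Each of the first `m` rows of `T_c`
restricted to the columns `m, …, n` is the same vector `(c_{k+1} - c_k)_k`, so the first `m`
coordinates of `T_c f` all equal `S = Σ_{k=m}^{n} |c_{k+1} - c_k|²`, while `‖f‖² = S`.
Hence `m S² ≤ ‖T_c f‖² ≤ ‖T_c‖² S`.
-/

open Finset

namespace lp

variable {ι 𝕜 : Type*} [RCLike 𝕜]

theorem sum_norm_sq_le_norm_sq (f : lp (fun _ : ι => 𝕜) 2) (r : Finset ι) :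
    ∑ j ∈ r, ‖f j‖ ^ 2 ≤ ‖f‖ ^ 2 := by
  exact_mod_cast lp.sum_rpow_le_norm_rpow (by norm_num) f r

variable [DecidableEq ι]

theorem norm_sq_sum_single (s : Finset ι) (g : ι → 𝕜) :
    ‖∑ k ∈ s, lp.single 2 k (g k)‖ ^ 2 = ∑ k ∈ s, ‖g k‖ ^ 2 := by
  have h := lp.norm_sum_single (p := 2) (E := fun _ : ι => 𝕜) (by norm_num) g s
  simpa only [ENNReal.toReal_ofNat, Real.rpow_two] using h

theorem card_mul_sum_norm_sq_le_opNorm_sq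
    (T : lp (fun _ : ι => 𝕜) 2 →L[𝕜] lp (fun _ : ι => 𝕜) 2) (r s : Finset ι) (d : ι → 𝕜)
    (hT : ∀ f : lp (fun _ : ι => 𝕜) 2, (∀ k ∉ s, f k = 0) →
      ∀ j ∈ r, T f j = ∑ k ∈ s, d k * f k) :
    (#r : ℝ) * ∑ k ∈ s, ‖d k‖ ^ 2 ≤ ‖T‖ ^ 2 := by
  set S := ∑ k ∈ s, ‖d k‖ ^ 2
  have hS0 : 0 ≤ S := sum_nonneg fun k _ => sq_nonneg ‖d k‖
  rcases hS0.eq_or_lt with hS | hS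
  · rw [← hS, mul_zero]
    positivity
  set f : lp (fun _ : ι => 𝕜) 2 := ∑ k ∈ s, lp.single 2 k (starRingEnd 𝕜 (d k))
  have hf_apply : ∀ k, f k = if k ∈ s then starRingEnd 𝕜 (d k) else 0 := fun k => by
    simp only [f, lp.coeFn_sum, Finset.sum_apply, lp.coeFn_single, sum_pi_single]
  have hf_norm : ‖f‖ ^ 2 = S := (norm_sq_sum_single s _).trans (by simp [S])
  have hTf : ∀ j ∈ r, ‖T f j‖ = S := fun j hj => by
    have hsupp : ∀ k ∉ s, f k = 0 := fun k hk => by rw [hf_apply, if_neg hk]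
    rw [hT f hsupp j hj, sum_congr rfl fun k hk => by rw [hf_apply, if_pos hk, RCLike.mul_conj]]
    norm_cast
    exact Real.norm_of_nonneg hS.le
  have h_mul : (#r : ℝ) * S * S ≤ ‖T‖ ^ 2 * S :=
    calc (#r : ℝ) * S * S = ∑ j ∈ r, ‖T f j‖ ^ 2 := by
          rw [sum_congr rfl fun j hj => by rw [hTf j hj], sum_const, nsmul_eq_mul]; ring
      _ ≤ ‖T f‖ ^ 2 := sum_norm_sq_le_norm_sq (T f) r
      _ ≤ (‖T‖ * ‖f‖) ^ 2 := by gcongr; exact T.le_opNorm f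
      _ = ‖T‖ ^ 2 * S := by rw [mul_pow, hf_norm]
  exact le_of_mul_le_mul_right h_mul hS

end lp

theorem stmt18_general (c : ℕ → ℂ)
    (m n : ℕ)
    (T : lp (fun _ : ℕ => ℂ) 2 →L[ℂ] lp (fun _ : ℕ => ℂ) 2)
    (hT : ∀ (f : lp (fun _ : ℕ => ℂ) 2) (j : ℕ),
      (T f : ℕ → ℂ) j = ∑' k : ℕ,
        (if j = k then c (k + 1) else if j < k then c (k + 1) - c k else 0) * (f : ℕ → ℂ) k) :
    (m : ℝ) * ∑ k ∈ Finset.Icc m n, ‖c (k + 1) - c k‖ ^ 2 ≤ ‖T‖ ^ 2 := by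
  have h := lp.card_mul_sum_norm_sq_le_opNorm_sq T (range m) (Icc m n) (fun k => c (k + 1) - c k)
    fun f hf j hj => by
      rw [hT, tsum_eq_sum fun k hk => by rw [hf k hk, mul_zero]]
      refine sum_congr rfl fun k hk => ?_
      have hjk : j < k := (mem_range.mp hj).trans_le (mem_Icc.mp hk).1
      rw [if_neg hjk.ne, if_pos hjk]
  simpa using h

/-- Lower bound for the norm of the upper-triangular matrix T_c on ℓ²
(indices shifted so that Lean index j corresponds to matrix index j+1 ≥ 1):
for 1 ≤ m ≤ n, ‖T_c‖² ≥ m Σ_{k=m}^n |c_{k+1} − c_k|². -/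
theorem stmt18 (c : ℕ → ℂ) (hc : ∃ N : ℕ, ∀ k, N < k → c k = 0)
    (m n : ℕ) (hm : 1 ≤ m) (hmn : m ≤ n)
    (T : lp (fun _ : ℕ => ℂ) 2 →L[ℂ] lp (fun _ : ℕ => ℂ) 2)
    (hT : ∀ (f : lp (fun _ : ℕ => ℂ) 2) (j : ℕ),
      (T f : ℕ → ℂ) j = ∑' k : ℕ,
        (if j = k then c (k + 1) else if j < k then c (k + 1) - c k else 0) * (f : ℕ → ℂ) k) :
    (m : ℝ) * ∑ k ∈ Finset.Icc m n, ‖c (k + 1) - c k‖ ^ 2 ≤ ‖T‖ ^ 2 :=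
  stmt18_general c m n T hT
end

section
/- Combining the two bounds: if h_n(z) = Σ_{k=0}^n (1−k/(n+1))^{1/2} z^k and T_{h_n} is the associated upper-triangular matrix built from the coefficients c_k = (1−k/(n+1))^{1/2}, then ‖T_{h_n} : ℓ² → ℓ²‖² ≥ (1/8) log((n+1)/2), so ‖T_{h_n}‖ → ∞ as n → ∞. -/
/-!
Write `e_k` for the unit vectors and `T_c` for the operator whose (0-based) column `k` carries
`c (k+1)` on the diagonal and `c (k+1) - c k` above it. For `m ≤ k ≤ n` put
`g = ∑ conj (c (k+1) - c k) e_k`: each of the first `m` rows of `T_c` sees `g` only through the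
strictly upper part, so `(T_c g)_j = ‖g‖²` for `j < m`, whence `m ‖g‖⁴ ≤ ‖T_c g‖² ≤ ‖T_c‖² ‖g‖²`,
i.e. `‖T_c‖² ≥ m ∑_{k=m}^n |c (k+1) - c k|²`. For `c k = √(1 - k/(n+1))` the `k`-th term is at
least `1/(4(n+1)(n+1-k))` because `(√(a+1) - √a)² ≥ 1/(4(a+1))`, so the sum is at least
`H_{n+1-m} / (4(n+1)) ≥ log((n+1)/2) / (4(n+1))`, and `m = ⌊n/2⌋ + 1 ≥ (n+1)/2` gives the bound.
-/

open Filter Finset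

lemma inv_four_mul_le_sq_sqrt_add_one_sub_sqrt {a : ℝ} (ha : 0 ≤ a) :
    (4 * (a + 1))⁻¹ ≤ (√(a + 1) - √a) ^ 2 := by
  have hprod : (√(a + 1) - √a) * (√(a + 1) + √a) = 1 := by
    rw [mul_comm, ← sq_sub_sq, Real.sq_sqrt (by linarith), Real.sq_sqrt ha]
    ring
  have hle : √(a + 1) + √a ≤ 2 * √(a + 1) := by
    linarith [Real.sqrt_le_sqrt (show a ≤ a + 1 by linarith)]
  calc (4 * (a + 1))⁻¹ = ((2 * √(a + 1)) ^ 2)⁻¹ := by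
        rw [mul_pow, Real.sq_sqrt (by linarith)]
        norm_num
    _ ≤ ((√(a + 1) + √a) ^ 2)⁻¹ := by gcongr
    _ = (√(a + 1) - √a) ^ 2 := by rw [eq_inv_of_mul_eq_one_left hprod, inv_pow]

namespace lp

variable {α E : Type*} [DecidableEq α] [NormedAddCommGroup E]

lemma sq_norm_sum_single (s : Finset α) (v : α → E) :
    ‖∑ i ∈ s, lp.single 2 i (v i)‖ ^ 2 = ∑ i ∈ s, ‖v i‖ ^ 2 := by
  simpa using lp.norm_sum_single (p := 2) (by norm_num) v s

lemma natCast_mul_sq_norm_le_sq_norm (f : lp (fun _ : ℕ => E) 2) {m : ℕ} {a : E}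
    (hf : ∀ j < m, f j = a) : m * ‖a‖ ^ 2 ≤ ‖f‖ ^ 2 := by
  have h := lp.sum_rpow_le_norm_rpow (p := 2) (by norm_num) f (range m)
  simp only [ENNReal.toReal_ofNat, Real.rpow_ofNat] at h
  rwa [sum_congr rfl fun j hj => by rw [hf j (mem_range.1 hj)], sum_const, card_range,
    nsmul_eq_mul] at h

end lp

section UpperTriangular

variable {𝕜 : Type*} [RCLike 𝕜]

open ComplexConjugate in
lemma natCast_mul_sum_sq_norm_le_sq_opNorm {α : Type*} [DecidableEq α]
    (A : lp (fun _ : α => 𝕜) 2 →L[𝕜] lp (fun _ : ℕ => 𝕜) 2) (b : α → 𝕜) {m : ℕ}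
    {s : Finset α} (hcol : ∀ k ∈ s, ∀ j < m, A (lp.single 2 k 1) j = b k) :
    m * ∑ k ∈ s, ‖b k‖ ^ 2 ≤ ‖A‖ ^ 2 := by
  set S := ∑ k ∈ s, ‖b k‖ ^ 2
  set g := ∑ k ∈ s, lp.single 2 k (conj (b k))
  have hg : ‖g‖ ^ 2 = S := by simp only [g, S, lp.sq_norm_sum_single, RCLike.norm_conj]
  have hAg : ∀ j < m, A g j = S := by
    intro j hj
    have hsingle : ∀ k, (lp.single 2 k (conj (b k)) : lp (fun _ : α => 𝕜) 2) =
        conj (b k) • lp.single 2 k 1 := by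
      intro k; rw [← lp.single_smul, smul_eq_mul, mul_one]
    simp only [g, S, hsingle, map_sum, map_smul, lp.coeFn_sum, lp.coeFn_smul, Finset.sum_apply,
      Pi.smul_apply, smul_eq_mul, RCLike.ofReal_pow]
    exact sum_congr rfl fun k hk => by rw [hcol k hk j hj, RCLike.conj_mul]
  obtain hS | hS := (show 0 ≤ S by positivity).eq_or_lt
  · simp [← hS]
  refine le_of_mul_le_mul_right ?_ hS
  calc m * S * S = m * ‖(S : 𝕜)‖ ^ 2 := by
        rw [RCLike.norm_ofReal, abs_of_pos hS]; ring
    _ ≤ ‖A g‖ ^ 2 := lp.natCast_mul_sq_norm_le_sq_norm _ hAg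
    _ ≤ (‖A‖ * ‖g‖) ^ 2 := by gcongr; exact A.le_opNorm g
    _ = ‖A‖ ^ 2 * S := by rw [mul_pow, hg]

lemma natCast_mul_sum_sq_norm_sub_le_sq_opNorm
    (A : lp (fun _ : ℕ => 𝕜) 2 →L[𝕜] lp (fun _ : ℕ => 𝕜) 2) (c : ℕ → 𝕜)
    (hA : ∀ (f : lp (fun _ : ℕ => 𝕜) 2) (j : ℕ), A f j = ∑' k : ℕ,
      (if j = k then c (k + 1) else if j < k then c (k + 1) - c k else 0) * f k)
    {m : ℕ} {s : Finset ℕ} (hs : ∀ k ∈ s, m ≤ k) :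
    m * ∑ k ∈ s, ‖c (k + 1) - c k‖ ^ 2 ≤ ‖A‖ ^ 2 := by
  refine natCast_mul_sum_sq_norm_le_sq_opNorm A _ fun k hk j hj => ?_
  have hjk : j < k := hj.trans_le (hs k hk)
  rw [hA, tsum_eq_single k fun i hi => by rw [lp.single_apply_ne _ _ _ hi, mul_zero]]
  rw [lp.single_apply_self, mul_one, if_neg hjk.ne, if_pos hjk]

end UpperTriangular

lemma harmonic_div_le_sum_sq_sqrt_sub (n m : ℕ) :
    (harmonic (n + 1 - m) : ℝ) / (4 * (n + 1)) ≤
      ∑ k ∈ Ico m (n + 1), (√(1 - (k + 1) / (n + 1)) - √(1 - k / (n + 1))) ^ 2 := by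
  have hn : (0 : ℝ) < n + 1 := by positivity
  have hterm : ∀ k ∈ Ico m (n + 1), (4 * ((n : ℝ) + 1))⁻¹ * (((n - k : ℕ) : ℝ) + 1)⁻¹ ≤
      (√(1 - (k + 1) / (n + 1)) - √(1 - k / (n + 1))) ^ 2 := by
    intro k hk
    have hkn : k ≤ n := Nat.lt_succ_iff.mp (mem_Ico.mp hk).2
    set a : ℝ := ((n - k : ℕ) : ℝ)
    have hk : 1 - (k : ℝ) / (n + 1) = (a + 1) / (n + 1) := by
      field_simp; push_cast [a, Nat.cast_sub hkn]; ring
    have hk1 : 1 - ((k : ℝ) + 1) / (n + 1) = a / (n + 1) := by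
      field_simp; push_cast [a, Nat.cast_sub hkn]; ring
    rw [hk, hk1, Real.sqrt_div' _ hn.le, Real.sqrt_div' _ hn.le, ← sub_div, div_pow,
      Real.sq_sqrt hn.le, sub_sq_comm]
    calc (4 * ((n : ℝ) + 1))⁻¹ * (a + 1)⁻¹ = (4 * (a + 1))⁻¹ / (n + 1) := by
          rw [mul_inv, mul_inv, div_eq_mul_inv]; ring
      _ ≤ (√(a + 1) - √a) ^ 2 / (n + 1) := by
        gcongr; exact inv_four_mul_le_sq_sqrt_add_one_sub_sqrt (Nat.cast_nonneg _)
  refine Eq.trans_le ?_ (sum_le_sum hterm)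
  rw [← mul_sum, sum_Ico_reflect (fun j => ((j : ℝ) + 1)⁻¹) m le_rfl, Nat.sub_self,
    ← range_eq_Ico, harmonic]
  push_cast
  ring

lemma inv_eight_mul_log_le_mul_harmonic_div {n m : ℕ} (hm : n + 1 ≤ 2 * m)
    (hm' : 2 * m ≤ n + 2) :
    1 / 8 * Real.log ((n + 1) / 2) ≤ m * ((harmonic (n + 1 - m) : ℝ) / (4 * (n + 1))) := by
  have hH : Real.log ((n + 1) / 2) ≤ harmonic (n + 1 - m) := by
    refine (Real.log_le_log (by positivity) ?_).trans (log_add_one_le_harmonic _)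
    rw [div_le_iff₀ two_pos]
    exact_mod_cast (show n + 1 ≤ (n + 1 - m + 1) * 2 by omega)
  have hm8 : 1 / 8 ≤ (m : ℝ) / (4 * (n + 1)) := by
    rw [div_le_div_iff₀ (by norm_num) (by positivity)]
    exact_mod_cast (by omega)
  calc 1 / 8 * Real.log ((n + 1) / 2) ≤ 1 / 8 * (harmonic (n + 1 - m) : ℝ) := by gcongr
    _ ≤ m / (4 * (n + 1)) * harmonic (n + 1 - m) := by
        gcongr
        rw [harmonic]; push_cast; positivity
    _ = m * ((harmonic (n + 1 - m) : ℝ) / (4 * (n + 1))) := by ring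


lemma ite_rpow_half_eq_sqrt {n k : ℕ} (hk : k ≤ n + 1) :
    (if k ≤ n then (((1 - (k : ℝ) / ((n : ℝ) + 1)) ^ ((1 : ℝ) / 2) : ℝ) : ℂ) else 0) =
      ((√(1 - k / (n + 1)) : ℝ) : ℂ) := by
  rw [Real.sqrt_eq_rpow]
  split_ifs with hkn
  · rfl
  · rw [show k = n + 1 by omega, Nat.cast_succ, div_self (by positivity), sub_self,
      Real.zero_rpow one_half_pos.ne', Complex.ofReal_zero]

lemma inv_eight_mul_log_le_sq_opNorm (A : lp (fun _ : ℕ => ℂ) 2 →L[ℂ] lp (fun _ : ℕ => ℂ) 2)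
    {n : ℕ} (c : ℕ → ℂ) (hc : ∀ k ≤ n + 1, c k = ((√(1 - k / (n + 1)) : ℝ) : ℂ))
    (hA : ∀ (f : lp (fun _ : ℕ => ℂ) 2) (j : ℕ), A f j = ∑' k : ℕ,
      (if j = k then c (k + 1) else if j < k then c (k + 1) - c k else 0) * f k) :
    1 / 8 * Real.log ((n + 1) / 2) ≤ ‖A‖ ^ 2 := by
  set m := n / 2 + 1
  have hdiff : ∀ k ∈ Ico m (n + 1),
      ‖c (k + 1) - c k‖ ^ 2 = (√(1 - (k + 1) / (n + 1)) - √(1 - k / (n + 1))) ^ 2 := by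
    intro k hk
    have hkn : k ≤ n := Nat.lt_succ_iff.mp (mem_Ico.mp hk).2
    rw [hc (k + 1) (by omega), hc k (by omega), ← Complex.ofReal_sub, Complex.norm_real,
      Real.norm_eq_abs, sq_abs, Nat.cast_succ]
  calc 1 / 8 * Real.log ((n + 1) / 2) ≤ m * ((harmonic (n + 1 - m) : ℝ) / (4 * (n + 1))) :=
        inv_eight_mul_log_le_mul_harmonic_div (by omega) (by omega)
    _ ≤ m * ∑ k ∈ Ico m (n + 1), ‖c (k + 1) - c k‖ ^ 2 := by
        rw [sum_congr rfl hdiff]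
        gcongr
        exact harmonic_div_le_sum_sq_sqrt_sub n m
    _ ≤ ‖A‖ ^ 2 := natCast_mul_sum_sq_norm_sub_le_sq_opNorm A c hA fun k hk => (mem_Ico.mp hk).1

/-- For the coefficients c_k = (1 − k/(n+1))^{1/2} (for 1 ≤ k ≤ n, and 0 for k > n),
the associated upper-triangular matrices T_{h_n} on ℓ² (indices shifted so that Lean
index j corresponds to matrix index j+1 ≥ 1) satisfy ‖T_{h_n}‖² ≥ (1/8)·log((n+1)/2);
consequently ‖T_{h_n}‖ → ∞. -/
theorem stmt19 (T : ℕ → (lp (fun _ : ℕ => ℂ) 2 →L[ℂ] lp (fun _ : ℕ => ℂ) 2))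
    (c : ℕ → ℕ → ℂ)
    (hc : ∀ n k : ℕ, c n k =
      if k ≤ n then (((1 - (k : ℝ) / ((n : ℝ) + 1)) ^ ((1 : ℝ) / 2) : ℝ) : ℂ) else 0)
    (hT : ∀ n : ℕ, 1 ≤ n → ∀ (f : lp (fun _ : ℕ => ℂ) 2) (j : ℕ),
      (T n f : ℕ → ℂ) j = ∑' k : ℕ,
        (if j = k then c n (k + 1)
          else if j < k then c n (k + 1) - c n k
          else 0) * (f : ℕ → ℂ) k) :
    (∀ n : ℕ, 1 ≤ n → (1 / 8) * Real.log (((n : ℝ) + 1) / 2) ≤ ‖T n‖ ^ 2) ∧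
    Tendsto (fun n => ‖T n‖) atTop atTop := by
  have hbound : ∀ n : ℕ, 1 ≤ n → (1 / 8) * Real.log (((n : ℝ) + 1) / 2) ≤ ‖T n‖ ^ 2 :=
    fun n hn => inv_eight_mul_log_le_sq_opNorm (T n) (c n)
      (fun k hk => (hc n k).trans (ite_rpow_half_eq_sqrt hk)) (hT n hn)
  have hlog : Tendsto (fun n : ℕ => 1 / 8 * Real.log (((n : ℝ) + 1) / 2)) atTop atTop :=
    (Real.tendsto_log_atTop.comp ((tendsto_atTop_add_const_right _ 1
      tendsto_natCast_atTop_atTop).atTop_div_const two_pos)).const_mul_atTop (by norm_num)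
  have hsq : Tendsto (fun n => ‖T n‖ ^ 2) atTop atTop :=
    tendsto_atTop_mono' atTop ((eventually_ge_atTop 1).mono hbound) hlog
  exact ⟨hbound, (Real.tendsto_sqrt_atTop.comp hsq).congr fun n => Real.sqrt_sq (norm_nonneg _)⟩
end
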